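/- arXiv:2002.05550 — 6 statements merged into one kernel-verified Lean document; each statement's English description precedes it below -/
import Mathlib

section
/- Let n ≥ 1 and s ≥ 1 be natural numbers, and let R and Σ be s×s real matrices with Σ invertible. Then det(J_n ⊗ R + I_n ⊗ Σ) = det(Σ + n·R) · det(Σ)^(n−1). -/
open Matrix
open scoped Kronecker

theorem stmt0 (n s : ℕ) (hn : 1 ≤ n) (hs : 1 ≤ s)
    (R Sig : Matrix (Fin s) (Fin s) ℝ) (hSig : IsUnit Sig.det) :
    ((Matrix.of fun _ _ => (1 : ℝ) : Matrix (Fin n) (Fin n) ℝ) ⊗ₖ R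
        + (1 : Matrix (Fin n) (Fin n) ℝ) ⊗ₖ Sig).det
      = (Sig + (n : ℝ) • R).det * Sig.det ^ (n - 1) := by
  haveI : NeZero n := ⟨by omega⟩
  have hnR : (n:ℝ) ≠ 0 := Nat.cast_ne_zero.mpr (by omega)
  set J : Matrix (Fin n) (Fin n) ℝ := Matrix.of fun _ _ => 1 with hJ
  set P : Matrix (Fin n) (Fin n) ℝ :=
    Matrix.of (fun i j => if i = 0 then 1 else (if i = j then (1:ℝ) else 0) - (if j = 0 then 1 else 0)) with hP
  set Q : Matrix (Fin n) (Fin n) ℝ :=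
    Matrix.of (fun j k => if k = 0 then (1:ℝ)/n else (if j = k then 1 else 0) - 1/n) with hQ
  have hPQ : P * Q = 1 := by
    ext i k
    rw [mul_apply]
    by_cases hi : i = 0 <;> by_cases hk : k = 0 <;>
      simp [hP, hQ, hi, hk, one_apply, eq_comm, sub_mul, mul_sub, Finset.sum_sub_distrib,
        Finset.sum_ite_eq, Finset.sum_ite_eq', Finset.card_univ, mul_comm] <;>
      try field_simp
  have hJQ : J * Q = Matrix.of fun _ k => if k = 0 then (1:ℝ) else 0 := by
    ext j k
    rw [mul_apply]
    by_cases hk : k = 0 <;>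
      simp [hJ, hQ, hk, Finset.sum_sub_distrib, Finset.sum_ite_eq', Finset.card_univ] <;>
      try field_simp
  have hPJQ : P * J * Q = Matrix.of fun i k => if i = 0 ∧ k = 0 then (n:ℝ) else 0 := by
    rw [mul_assoc, hJQ]
    ext i k
    rw [mul_apply]
    by_cases hi : i = 0 <;> by_cases hk : k = 0 <;>
      simp [hP, hi, hk, sub_mul, Finset.sum_sub_distrib, Finset.sum_ite_eq',
        Finset.card_univ]
  set D : Matrix (Fin n) (Fin n) ℝ := Matrix.of fun i k => if i = 0 ∧ k = 0 then (n:ℝ) else 0 with hD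
  set M : Fin n → Matrix (Fin s) (Fin s) ℝ :=
    fun i => if i = 0 then Sig + (n:ℝ) • R else Sig with hM
  have hdet1 : (P ⊗ₖ (1 : Matrix (Fin s) (Fin s) ℝ)).det * (Q ⊗ₖ (1 : Matrix (Fin s) (Fin s) ℝ)).det = 1 := by
    rw [← det_mul, ← Matrix.mul_kronecker_mul, hPQ, mul_one, Matrix.one_kronecker_one, det_one]
  have hconj : ((P ⊗ₖ (1 : Matrix (Fin s) (Fin s) ℝ)) * (J ⊗ₖ R + 1 ⊗ₖ Sig)
      * (Q ⊗ₖ (1 : Matrix (Fin s) (Fin s) ℝ))) = D ⊗ₖ R + 1 ⊗ₖ Sig := by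
    rw [mul_add, add_mul, ← Matrix.mul_kronecker_mul, ← Matrix.mul_kronecker_mul,
      ← Matrix.mul_kronecker_mul, ← Matrix.mul_kronecker_mul, one_mul, mul_one, mul_one,
      hPJQ, hPQ]
    simp
  have hblock : D ⊗ₖ R + 1 ⊗ₖ Sig
      = (Matrix.blockDiagonal M).submatrix (Equiv.prodComm (Fin n) (Fin s))
        (Equiv.prodComm (Fin n) (Fin s)) := by
    ext ⟨i, a⟩ ⟨j, b⟩
    simp only [Matrix.add_apply, Matrix.kroneckerMap_apply, Matrix.submatrix_apply,
      Equiv.prodComm_apply, Prod.swap_prod_mk, Matrix.blockDiagonal_apply, hD, hM,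
      Matrix.of_apply, Matrix.one_apply]
    by_cases hij : i = j
    · subst hij
      by_cases hi : i = 0 <;> simp [hi, Matrix.add_apply, Matrix.smul_apply, add_comm]
    · have hne : ¬(i = 0 ∧ j = 0) := fun h => hij (h.1.trans h.2.symm)
      simp [hij, hne, Matrix.one_apply]
  have hmain : (J ⊗ₖ R + 1 ⊗ₖ Sig).det
      = ((P ⊗ₖ (1 : Matrix (Fin s) (Fin s) ℝ)) * (J ⊗ₖ R + 1 ⊗ₖ Sig)
        * (Q ⊗ₖ (1 : Matrix (Fin s) (Fin s) ℝ))).det := by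
    rw [det_mul, det_mul, mul_right_comm, hdet1, one_mul]
  rw [hmain, hconj, hblock, Matrix.det_submatrix_equiv_self, Matrix.det_blockDiagonal]
  rw [← Finset.mul_prod_erase Finset.univ _ (Finset.mem_univ (0 : Fin n))]
  have h0 : M 0 = Sig + (n:ℝ) • R := by simp [hM]
  have hprod : ∀ i ∈ Finset.univ.erase (0 : Fin n), (M i).det = Sig.det := fun i hi => by
    simp only [Finset.mem_erase] at hi
    simp [hM, hi.1]
  rw [h0, Finset.prod_congr rfl hprod, Finset.prod_const,
    Finset.card_erase_of_mem (Finset.mem_univ _), Finset.card_univ, Fintype.card_fin]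
end

section
/- Let n ≥ 1 and s ≥ 1 be natural numbers, let R and Σ be symmetric positive definite s×s real matrices, and let G be an s×n real matrix. Set W = J_n ⊗ R + I_n ⊗ Σ and H = I_n − (1/n)·J_n. Then vec(G)ᵀ · W⁻¹ · vec(G) = Tr( (Σ + n·R)⁻¹ · G·Gᵀ + ((1/n)·Σ·R⁻¹·Σ + Σ)⁻¹ · G·H·Gᵀ ). -/
open Matrix
open scoped Kronecker

/-!
With `P = (1/n) • J` idempotent and `H = 1 - P`, the matrix `W = P ⊗ (Σ + n R) + H ⊗ Σ` splits
along complementary idempotents, so `W⁻¹ = P ⊗ (Σ + n R)⁻¹ + H ⊗ Σ⁻¹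
= 1 ⊗ (Σ + n R)⁻¹ + H ⊗ (Σ⁻¹ - (Σ + n R)⁻¹)`. The last factor is `((1/n) Σ R⁻¹ Σ + Σ)⁻¹`,
because `(1/n) Σ R⁻¹ Σ + Σ = (1/n) Σ R⁻¹ (Σ + n R)`, and each Kronecker term contributes
`vec(G)ᵀ (B ⊗ C) vec(G) = tr (C G Bᵀ Gᵀ)`.
-/

namespace Matrix

variable {K l m n p : Type*}

theorem sub_kronecker [Ring K] (A₁ A₂ : Matrix l m K) (B : Matrix n p K) :
    (A₁ - A₂) ⊗ₖ B = A₁ ⊗ₖ B - A₂ ⊗ₖ B := by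
  ext; simp [sub_mul]

theorem kronecker_sub [Ring K] (A : Matrix l m K) (B₁ B₂ : Matrix n p K) :
    A ⊗ₖ (B₁ - B₂) = A ⊗ₖ B₁ - A ⊗ₖ B₂ := by
  ext; simp [mul_sub]

theorem sum_sum_mul_mul_eq_dotProduct_mulVec [Fintype n] [CommSemiring K] (M : Matrix n n K)
    (v : n → K) :
    ∑ p, ∑ q, v p * M p q * v q = v ⬝ᵥ (M *ᵥ v) := by
  simp only [dotProduct, mulVec, Finset.mul_sum, mul_assoc]

theorem vec_dotProduct_kronecker_mulVec_vec [Fintype m] [Fintype n] [CommSemiring K]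
    (G : Matrix m n K) (B : Matrix n n K) (C : Matrix m m K) :
    vec G ⬝ᵥ ((B ⊗ₖ C) *ᵥ vec G) = trace (C * (G * Bᵀ * Gᵀ)) := by
  rw [kronecker_mulVec_vec, vec_dotProduct_vec, trace_mul_comm]
  simp only [Matrix.mul_assoc]

theorem smul_kronecker_add_one_kronecker [DecidableEq n] [CommRing K] (c : K) (P : Matrix n n K)
    (R S : Matrix m m K) :
    (c • P) ⊗ₖ R + (1 : Matrix n n K) ⊗ₖ S = P ⊗ₖ (S + c • R) + (1 - P) ⊗ₖ S := by
  rw [smul_kronecker, ← kronecker_smul, sub_kronecker, kronecker_add]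
  abel

theorem inv_kronecker_add_one_sub_kronecker [Fintype m] [Fintype n] [DecidableEq m]
    [DecidableEq n] [CommRing K] {P : Matrix n n K} (hP : IsIdempotentElem P)
    {A B : Matrix m m K} (hA : IsUnit A.det) (hB : IsUnit B.det) :
    (P ⊗ₖ A + (1 - P) ⊗ₖ B)⁻¹ = P ⊗ₖ A⁻¹ + (1 - P) ⊗ₖ B⁻¹ := by
  have hPQ : P * (1 - P) = 0 := by rw [Matrix.mul_sub, Matrix.mul_one, hP.eq, sub_self]
  have hQP : (1 - P) * P = 0 := by rw [Matrix.sub_mul, Matrix.one_mul, hP.eq, sub_self]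
  refine inv_eq_right_inv ?_
  rw [Matrix.add_mul, Matrix.mul_add, Matrix.mul_add, ← mul_kronecker_mul, ← mul_kronecker_mul,
    ← mul_kronecker_mul, ← mul_kronecker_mul, hP.eq, hPQ, hQP, hP.one_sub.eq,
    mul_nonsing_inv _ hA, mul_nonsing_inv _ hB, zero_kronecker, zero_kronecker, add_zero,
    zero_add, ← add_kronecker, add_sub_cancel, one_kronecker_one]

theorem inv_smul_mul_inv_mul_add_self_eq_inv_sub_inv [Fintype m] [DecidableEq m] [Field K]
    {c : K} (hc : c ≠ 0) {S R : Matrix m m K} (hS : IsUnit S.det)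
    (hR : IsUnit R.det) (hSR : IsUnit (S + c • R).det) :
    (c⁻¹ • (S * R⁻¹ * S) + S)⁻¹ = S⁻¹ - (S + c • R)⁻¹ := by
  set A := S + c • R
  have hfactor : c⁻¹ • (S * R⁻¹ * S) + S = c⁻¹ • (S * R⁻¹) * A := by
    rw [Matrix.smul_mul, Matrix.mul_add, Matrix.mul_smul, Matrix.mul_assoc S R⁻¹ R,
      nonsing_inv_mul _ hR, Matrix.mul_one, smul_add, smul_smul, inv_mul_cancel₀ hc, one_smul]
  have hcomp : A * (S⁻¹ - A⁻¹) = c • (R * S⁻¹) := by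
    rw [Matrix.mul_sub, mul_nonsing_inv _ hSR, Matrix.add_mul, mul_nonsing_inv _ hS,
      Matrix.smul_mul]
    abel
  refine inv_eq_right_inv ?_
  rw [hfactor, Matrix.mul_assoc, hcomp, Matrix.smul_mul, Matrix.mul_smul, smul_smul,
    inv_mul_cancel₀ hc, one_smul, Matrix.mul_assoc, ← Matrix.mul_assoc R⁻¹,
    nonsing_inv_mul _ hR, Matrix.one_mul, mul_nonsing_inv _ hS]

theorem of_one_mul_of_one [Fintype n] [NonAssocSemiring K] :
    (of fun _ _ => 1 : Matrix n n K) * of (fun _ _ => 1)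
      = (Fintype.card n : K) • of fun _ _ => 1 := by
  ext; simp [mul_apply]

theorem isIdempotentElem_inv_smul_of_one [Fintype n] [Field K] (h : (Fintype.card n : K) ≠ 0) :
    IsIdempotentElem ((Fintype.card n : K)⁻¹ • of fun _ _ => 1 : Matrix n n K) := by
  rw [IsIdempotentElem, Matrix.smul_mul, Matrix.mul_smul, of_one_mul_of_one, smul_smul,
    smul_smul, inv_mul_cancel_right₀ h]

end Matrix

theorem stmt1_general (n s : ℕ) (hn : 1 ≤ n)
    (R Sig : Matrix (Fin s) (Fin s) ℝ) (hR : R.PosDef) (hSig : Sig.PosDef)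
    (G : Matrix (Fin s) (Fin n) ℝ) :
    let J : Matrix (Fin n) (Fin n) ℝ := Matrix.of fun _ _ => 1
    let W : Matrix (Fin n × Fin s) (Fin n × Fin s) ℝ :=
      J ⊗ₖ R + (1 : Matrix (Fin n) (Fin n) ℝ) ⊗ₖ Sig
    let H : Matrix (Fin n) (Fin n) ℝ := 1 - (1 / (n : ℝ)) • J
    let v : Fin n × Fin s → ℝ := fun p => G p.2 p.1
    (∑ p : Fin n × Fin s, ∑ q : Fin n × Fin s, v p * W⁻¹ p q * v q)
      = Matrix.trace ((Sig + (n : ℝ) • R)⁻¹ * (G * Gᵀ)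
          + ((1 / (n : ℝ)) • (Sig * R⁻¹ * Sig) + Sig)⁻¹ * (G * H * Gᵀ)) := by
  intro J W H v
  have hn0 : (n : ℝ) ≠ 0 := Nat.cast_ne_zero.mpr (by omega)
  set P : Matrix (Fin n) (Fin n) ℝ := (n : ℝ)⁻¹ • J
  have hP : IsIdempotentElem P := by
    have := isIdempotentElem_inv_smul_of_one (n := Fin n) (K := ℝ) (by rwa [Fintype.card_fin])
    rwa [Fintype.card_fin] at this
  have hH : H = 1 - P := by simp only [H, P, one_div]
  have hA : (Sig + (n : ℝ) • R).PosDef := hSig.add (hR.smul (by positivity))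
  have hAU := hA.det_pos.ne'.isUnit
  have hRU := hR.det_pos.ne'.isUnit
  have hSigU := hSig.det_pos.ne'.isUnit
  have hW : W = P ⊗ₖ (Sig + (n : ℝ) • R) + (1 - P) ⊗ₖ Sig := by
    rw [← smul_kronecker_add_one_kronecker, smul_smul, mul_inv_cancel₀ hn0, one_smul]
  have hWinv : W⁻¹ = 1 ⊗ₖ (Sig + (n : ℝ) • R)⁻¹
      + H ⊗ₖ ((1 / (n : ℝ)) • (Sig * R⁻¹ * Sig) + Sig)⁻¹ := by
    rw [hH, hW, inv_kronecker_add_one_sub_kronecker hP hAU hSigU, one_div,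
      inv_smul_mul_inv_mul_add_self_eq_inv_sub_inv hn0 hSigU hRU hAU, kronecker_sub,
      sub_kronecker, sub_kronecker]
    abel
  have hHt : Hᵀ = H := by ext i j; simp [H, J, one_apply, eq_comm]
  calc ∑ p, ∑ q, v p * W⁻¹ p q * v q = vec G ⬝ᵥ (W⁻¹ *ᵥ vec G) :=
        sum_sum_mul_mul_eq_dotProduct_mulVec _ _
    _ = _ := by
      rw [hWinv, add_mulVec, dotProduct_add, vec_dotProduct_kronecker_mulVec_vec,
        vec_dotProduct_kronecker_mulVec_vec, transpose_one, Matrix.mul_one, hHt, trace_add]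

theorem stmt1 (n s : ℕ) (hn : 1 ≤ n) (hs : 1 ≤ s)
    (R Sig : Matrix (Fin s) (Fin s) ℝ) (hR : R.PosDef) (hSig : Sig.PosDef)
    (G : Matrix (Fin s) (Fin n) ℝ) :
    let J : Matrix (Fin n) (Fin n) ℝ := Matrix.of fun _ _ => 1
    let W : Matrix (Fin n × Fin s) (Fin n × Fin s) ℝ :=
      J ⊗ₖ R + (1 : Matrix (Fin n) (Fin n) ℝ) ⊗ₖ Sig
    let H : Matrix (Fin n) (Fin n) ℝ := 1 - (1 / (n : ℝ)) • J
    let v : Fin n × Fin s → ℝ := fun p => G p.2 p.1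
    (∑ p : Fin n × Fin s, ∑ q : Fin n × Fin s, v p * W⁻¹ p q * v q)
      = Matrix.trace ((Sig + (n : ℝ) • R)⁻¹ * (G * Gᵀ)
          + ((1 / (n : ℝ)) • (Sig * R⁻¹ * Sig) + Sig)⁻¹ * (G * H * Gᵀ)) :=
  stmt1_general n s hn R Sig hR hSig G
end

section
/- Let n ≥ 1 and s ≥ 1 be natural numbers, let R be a symmetric positive definite s×s real matrix, let G be an s×n real matrix, let H = I_n − (1/n)·J_n, and set Σ̂ = (1/n)·G·H·Gᵀ. If Σ̂ is invertible, then Tr( (Σ̂ + n·R)⁻¹ · G·Gᵀ + ((1/n)·Σ̂·R⁻¹·Σ̂ + Σ̂)⁻¹ · G·H·Gᵀ ) = Tr( n · (G·H·Gᵀ + n²·R)⁻¹ · (G·Gᵀ + n²·R) ). -/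
/-!
Write `A = G H Gᵀ` and `C = A + n² R`, so that `Σ̂ = A / n`. Then `Σ̂ + n R = C / n` and
`Σ̂ R⁻¹ Σ̂ / n + Σ̂ = A R⁻¹ C / n³`, whose inverses are `n C⁻¹` and `n³ C⁻¹ R A⁻¹`. Hence the
matrix inside the left-hand trace is `n C⁻¹ G Gᵀ + n³ C⁻¹ R = n C⁻¹ (G Gᵀ + n² R)`: the identity
already holds before taking traces.
-/

open Matrix

namespace Matrix

variable {m K : Type*} [Fintype m] [DecidableEq m] [Field K] {c : K} {A R : Matrix m m K}

/-- When `M` is singular both sides are the junk value `0`. -/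
theorem inv_smul_of_ne_zero (hc : c ≠ 0) (M : Matrix m m K) : (c • M)⁻¹ = c⁻¹ • M⁻¹ := by
  by_cases hM : IsUnit M.det
  · simpa [Units.smul_def] using inv_smul' M (Units.mk0 c hc) hM
  · have hcM : ¬IsUnit (c • M).det := by
      rwa [det_smul, IsUnit.mul_iff, not_and_or, or_iff_right (by simp [hc])]
    rw [nonsing_inv_apply_not_isUnit _ hM, nonsing_inv_apply_not_isUnit _ hcM, smul_zero]

theorem inv_smul_add_smul_eq (hc : c ≠ 0) (A R : Matrix m m K) :
    (c⁻¹ • A + c • R)⁻¹ = c • (A + c ^ 2 • R)⁻¹ := by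
  have hfactor : c⁻¹ • A + c • R = c⁻¹ • (A + c ^ 2 • R) := by
    rw [smul_add, smul_smul]
    congr 2
    field_simp
  rw [hfactor, inv_smul_of_ne_zero (inv_ne_zero hc), inv_inv]

theorem inv_smul_sandwich_add_mul_eq (hc : c ≠ 0) (hA : IsUnit A.det) (hR : IsUnit R.det) :
    (c⁻¹ • (c⁻¹ • A * R⁻¹ * (c⁻¹ • A)) + c⁻¹ • A)⁻¹ * A = c ^ 3 • ((A + c ^ 2 • R)⁻¹ * R) := by
  have hfactor : c⁻¹ • (c⁻¹ • A * R⁻¹ * (c⁻¹ • A)) + c⁻¹ • A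
      = (c ^ 3)⁻¹ • (A * R⁻¹ * (A + c ^ 2 • R)) := by
    rw [Matrix.mul_add, Matrix.mul_smul (A * R⁻¹), Matrix.mul_assoc A R⁻¹ R, nonsing_inv_mul R hR,
      Matrix.mul_one]
    simp only [Matrix.smul_mul, Matrix.mul_smul, smul_smul, smul_add]
    congr 2 <;> field_simp
  rw [hfactor, inv_smul_of_ne_zero (inv_ne_zero (pow_ne_zero 3 hc)), inv_inv, mul_inv_rev,
    mul_inv_rev, nonsing_inv_nonsing_inv R hR, smul_mul, Matrix.mul_assoc, Matrix.mul_assoc,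
    nonsing_inv_mul A hA, Matrix.mul_one]

end Matrix

theorem stmt2_general (n s : ℕ) (hn : 1 ≤ n)
    (R : Matrix (Fin s) (Fin s) ℝ) (hR : R.PosDef)
    (G : Matrix (Fin s) (Fin n) ℝ) :
    let J : Matrix (Fin n) (Fin n) ℝ := Matrix.of fun _ _ => 1
    let H : Matrix (Fin n) (Fin n) ℝ := 1 - (1 / (n : ℝ)) • J
    let SigHat : Matrix (Fin s) (Fin s) ℝ := (1 / (n : ℝ)) • (G * H * Gᵀ)
    IsUnit SigHat.det →
    Matrix.trace ((SigHat + (n : ℝ) • R)⁻¹ * (G * Gᵀ)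
        + ((1 / (n : ℝ)) • (SigHat * R⁻¹ * SigHat) + SigHat)⁻¹ * (G * H * Gᵀ))
      = Matrix.trace ((n : ℝ) •
          ((G * H * Gᵀ + ((n : ℝ) ^ 2) • R)⁻¹ * (G * Gᵀ + ((n : ℝ) ^ 2) • R))) := by
  intro J H SigHat hSigHat
  have hn0 : (n : ℝ) ≠ 0 := by positivity
  have hA : IsUnit (G * H * Gᵀ).det := by
    simp only [SigHat, det_smul, IsUnit.mul_iff] at hSigHat
    exact hSigHat.2
  have hRdet : IsUnit R.det := (isUnit_iff_isUnit_det R).mp hR.isUnit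
  simp only [SigHat, one_div]
  rw [inv_smul_add_smul_eq hn0, inv_smul_sandwich_add_mul_eq hn0 hA hRdet, Matrix.mul_add,
    smul_add, Matrix.smul_mul, Matrix.mul_smul, smul_smul, ← pow_succ']

theorem stmt2 (n s : ℕ) (hn : 1 ≤ n) (hs : 1 ≤ s)
    (R : Matrix (Fin s) (Fin s) ℝ) (hR : R.PosDef)
    (G : Matrix (Fin s) (Fin n) ℝ) :
    let J : Matrix (Fin n) (Fin n) ℝ := Matrix.of fun _ _ => 1
    let H : Matrix (Fin n) (Fin n) ℝ := 1 - (1 / (n : ℝ)) • J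
    let SigHat : Matrix (Fin s) (Fin s) ℝ := (1 / (n : ℝ)) • (G * H * Gᵀ)
    IsUnit SigHat.det →
    Matrix.trace ((SigHat + (n : ℝ) • R)⁻¹ * (G * Gᵀ)
        + ((1 / (n : ℝ)) • (SigHat * R⁻¹ * SigHat) + SigHat)⁻¹ * (G * H * Gᵀ))
      = Matrix.trace ((n : ℝ) •
          ((G * H * Gᵀ + ((n : ℝ) ^ 2) • R)⁻¹ * (G * Gᵀ + ((n : ℝ) ^ 2) • R))) :=
  stmt2_general n s hn R hR G
end

section
/- Let n ≥ 1 and s ≥ 1 be natural numbers, and let R and Σ be s×s real matrices with Σ invertible. Then det(J_n ⊗ R + I_n ⊗ Σ) = det(I_s + n·Σ⁻¹·R) · det(Σ)^n. -/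
open Matrix
open scoped Kronecker

/-!
Factor out `I_n ⊗ Σ`: the matrix is `(I_n ⊗ Σ)(I + J_n ⊗ Σ⁻¹R)`. Writing `J_n ⊗ M = A B` with
`A : (n × s) × s` stacking `n` copies of `M` and `B : s × (n × s)` placing `n` identity blocks side by
side, Sylvester's identity `det (1 + A B) = det (1 + B A)` reduces the second factor to
`det (I_s + n M)`, since `B A = n M`.
-/

namespace Matrix

variable {ι κ R : Type*} [Fintype ι] [DecidableEq ι] [Fintype κ] [DecidableEq κ] [CommRing R]

theorem kronecker_add_one_kronecker_eq_mul (A : Matrix ι ι R) (X S : Matrix κ κ R)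
    (hS : IsUnit S.det) :
    A ⊗ₖ X + (1 : Matrix ι ι R) ⊗ₖ S = ((1 : Matrix ι ι R) ⊗ₖ S) * (1 + A ⊗ₖ (S⁻¹ * X)) := by
  rw [mul_add, mul_one, ← mul_kronecker_mul, one_mul, mul_nonsing_inv_cancel_left _ _ hS,
    add_comm]

theorem det_one_add_allOnes_kronecker (M : Matrix κ κ R) :
    (1 + (of fun _ _ => (1 : R) : Matrix ι ι R) ⊗ₖ M).det = (1 + (Fintype.card ι : R) • M).det := by
  let A : Matrix (ι × κ) κ R := of fun p b => M p.2 b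
  let B : Matrix κ (ι × κ) R := of fun a p => (1 : Matrix κ κ R) a p.2
  have hAB : (of fun _ _ => (1 : R) : Matrix ι ι R) ⊗ₖ M = A * B := by
    ext ⟨i, a⟩ ⟨j, b⟩
    simp [A, B, mul_apply, one_apply]
  have hBA : B * A = (Fintype.card ι : R) • M := by
    ext a b
    simp [A, B, mul_apply, Fintype.sum_prod_type, one_apply]
  rw [hAB, det_one_add_mul_comm, hBA]

end Matrix

theorem stmt5_general (n s : ℕ)
    (R Sig : Matrix (Fin s) (Fin s) ℝ) (hSig : IsUnit Sig.det) :
    ((Matrix.of fun _ _ => (1 : ℝ) : Matrix (Fin n) (Fin n) ℝ) ⊗ₖ R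
        + (1 : Matrix (Fin n) (Fin n) ℝ) ⊗ₖ Sig).det
      = ((1 : Matrix (Fin s) (Fin s) ℝ) + (n : ℝ) • (Sig⁻¹ * R)).det * Sig.det ^ n := by
  rw [kronecker_add_one_kronecker_eq_mul _ _ _ hSig, det_mul, det_kronecker, det_one, one_pow,
    one_mul, det_one_add_allOnes_kronecker, Fintype.card_fin, mul_comm]

theorem stmt5 (n s : ℕ) (hn : 1 ≤ n) (hs : 1 ≤ s)
    (R Sig : Matrix (Fin s) (Fin s) ℝ) (hSig : IsUnit Sig.det) :
    ((Matrix.of fun _ _ => (1 : ℝ) : Matrix (Fin n) (Fin n) ℝ) ⊗ₖ R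
        + (1 : Matrix (Fin n) (Fin n) ℝ) ⊗ₖ Sig).det
      = ((1 : Matrix (Fin s) (Fin s) ℝ) + (n : ℝ) • (Sig⁻¹ * R)).det * Sig.det ^ n :=
  stmt5_general n s R Sig hSig
end

section
/- Let n ≥ 1 and s ≥ 1 be natural numbers, let R and Σ be symmetric positive definite s×s real matrices, let E be the real matrix of size (Fin n × Fin s) × Fin s defined by E((i,j), k) = 1 if j = k and 0 otherwise, and set W = J_n ⊗ R + I_n ⊗ Σ. Then for every vector v : Fin n × Fin s → ℝ, ∫_{δ ∈ ℝ^s} (2π)^(−ns/2) · det(Σ)^(−n/2) · exp(−(1/2)·(v − E·δ)ᵀ·(I_n ⊗ Σ)⁻¹·(v − E·δ)) · (2π)^(−s/2) · det(R)^(−1/2) · exp(−(1/2)·δᵀ·R⁻¹·δ) dδ = (2π)^(−ns/2) · det(W)^(−1/2) · exp(−(1/2)·vᵀ·W⁻¹·v), where the integral is with respect to s-dimensional Lebesgue measure. -/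
/-!
With `S = I_n ⊗ Σ`, the integrand is a constant times `exp (-q(δ)/2)`, where
`q(δ) = (v - Eδ)ᵀ S⁻¹ (v - Eδ) + δᵀ R⁻¹ δ`. Completing the square in `δ` with
`M = R⁻¹ + Eᵀ S⁻¹ E` and using the Woodbury identity gives
`q(δ) = (δ - μ)ᵀ M (δ - μ) + vᵀ (S + E R Eᵀ)⁻¹ v`. The Gaussian integral over `δ` contributes
`(2π)^(s/2) det(M)^(-1/2)`, and the matrix determinant lemma
`det (S + E R Eᵀ) = det S · det R · det M` turns the remaining constants into those of
`N(0, S + E R Eᵀ)`. Finally `J_n ⊗ R = E R Eᵀ`.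
-/

open Matrix MeasureTheory Real
open scoped Kronecker

section GaussianIntegral

variable {ι : Type*} [Fintype ι]

theorem integral_comp_mulVec [DecidableEq ι] {T : Matrix ι ι ℝ} (hT : T.det ≠ 0)
    (f : (ι → ℝ) → ℝ) :
    ∫ x, f (T *ᵥ x) = |T.det|⁻¹ * ∫ y, f y := by
  have hinj : (toLin' T).ker = ⊥ := by
    rw [LinearMap.ker_eq_bot]
    exact mulVec_injective_iff_isUnit.2 ((isUnit_iff_isUnit_det T).2 hT.isUnit)
  have hemb := (LinearMap.isClosedEmbedding_of_injective hinj).measurableEmbedding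
  rw [← abs_inv, ← smul_eq_mul, ← ENNReal.toReal_ofReal (abs_nonneg _), ← integral_smul_measure,
    ← map_matrix_volume_pi_eq_smul_volume_pi hT, hemb.integral_map]
  rfl

theorem integral_exp_neg_half_dotProduct_self :
    ∫ x : ι → ℝ, exp (-(1 / 2) * (x ⬝ᵥ x)) = (2 * π) ^ ((Fintype.card ι : ℝ) / 2) := by
  have hprod (x : ι → ℝ) : exp (-(1 / 2) * (x ⬝ᵥ x)) = ∏ i, exp (-(1 / 2) * x i ^ 2) := by
    simp only [← exp_sum, ← Finset.mul_sum, dotProduct, sq]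
  simp_rw [hprod]
  rw [integral_fintype_prod_volume_eq_pow (fun t : ℝ => exp (-(1 / 2) * t ^ 2)), integral_gaussian,
    show π / (1 / 2) = 2 * π by ring, sqrt_eq_rpow, ← rpow_natCast, ← rpow_mul (by positivity)]
  ring_nf

open scoped MatrixOrder in
theorem Matrix.PosDef.integral_exp_neg_half_dotProduct_mulVec [DecidableEq ι] {M : Matrix ι ι ℝ}
    (hM : M.PosDef) :
    ∫ x : ι → ℝ, exp (-(1 / 2) * (x ⬝ᵥ M *ᵥ x))
      = (2 * π) ^ ((Fintype.card ι : ℝ) / 2) * M.det ^ (-(1 : ℝ) / 2) := by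
  set T := CFC.sqrt M
  have hT : T.PosSemidef := (CFC.sqrt_nonneg M).posSemidef
  have hTT : T * T = M := CFC.sqrt_mul_sqrt_self M hM.posSemidef.nonneg
  have hdetT : T.det = √M.det := by
    rw [hM.posSemidef.det_sqrt, RCLike.sqrt_real]
  have hquad (x : ι → ℝ) : x ⬝ᵥ M *ᵥ x = (T *ᵥ x) ⬝ᵥ (T *ᵥ x) := by
    rw [← hTT, ← mulVec_mulVec, dotProduct_mulVec, ← mulVec_transpose,
      isHermitian_iff_isSymm.1 hT.isHermitian |>.eq]
  simp_rw [hquad]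
  rw [integral_comp_mulVec (hdetT ▸ (sqrt_pos.2 hM.det_pos).ne') fun y => exp (-(1 / 2) * (y ⬝ᵥ y)),
    integral_exp_neg_half_dotProduct_self, hdetT, abs_of_nonneg (sqrt_nonneg _), sqrt_eq_rpow,
    ← rpow_neg hM.det_pos.le, mul_comm]
  norm_num

end GaussianIntegral

namespace Matrix

variable {ι κ α : Type*} [Fintype ι] [Fintype κ] [CommRing α]

theorem IsSymm.dotProduct_mulVec_comm {P : Matrix ι ι α} (hP : P.IsSymm) (x y : ι → α) :
    x ⬝ᵥ P *ᵥ y = y ⬝ᵥ P *ᵥ x := by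
  rw [← dotProduct_transpose_mulVec, hP.eq]

theorem IsSymm.sub_dotProduct_mulVec_sub {P : Matrix ι ι α} (hP : P.IsSymm) (x y : ι → α) :
    (x - y) ⬝ᵥ P *ᵥ (x - y) = x ⬝ᵥ P *ᵥ x - 2 * (x ⬝ᵥ P *ᵥ y) + y ⬝ᵥ P *ᵥ y := by
  rw [mulVec_sub, dotProduct_sub, sub_dotProduct, sub_dotProduct, hP.dotProduct_mulVec_comm y x]
  ring

theorem IsSymm.complete_square [DecidableEq ι] {M : Matrix ι ι α} (hM : M.IsSymm)
    (hdet : IsUnit M.det) (x b : ι → α) :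
    (x - M⁻¹ *ᵥ b) ⬝ᵥ M *ᵥ (x - M⁻¹ *ᵥ b) = x ⬝ᵥ M *ᵥ x - 2 * (x ⬝ᵥ b) + b ⬝ᵥ M⁻¹ *ᵥ b := by
  have hMμ : M *ᵥ M⁻¹ *ᵥ b = b := by rw [mulVec_mulVec, mul_nonsing_inv _ hdet, one_mulVec]
  rw [hM.sub_dotProduct_mulVec_sub, hMμ, dotProduct_comm (M⁻¹ *ᵥ b)]

theorem dotProduct_transpose_mul_mul_mulVec (B : Matrix ι κ α) (P : Matrix ι ι α) (x y : κ → α) :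
    x ⬝ᵥ (Bᵀ * P * B) *ᵥ y = (B *ᵥ x) ⬝ᵥ P *ᵥ (B *ᵥ y) := by
  rw [← mulVec_mulVec, ← mulVec_mulVec, dotProduct_transpose_mulVec, dotProduct_comm]

theorem det_add_mul_mul_transpose [DecidableEq ι] [DecidableEq κ] {S : Matrix ι ι α}
    {R : Matrix κ κ α} (hS : IsUnit S.det) (hR : IsUnit R.det) (E : Matrix ι κ α) :
    (S + E * R * Eᵀ).det = S.det * R.det * (R⁻¹ + Eᵀ * S⁻¹ * E).det := by
  have hfactor : 1 + R * Eᵀ * S⁻¹ * E = R * (R⁻¹ + Eᵀ * S⁻¹ * E) := by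
    simp only [Matrix.mul_add, mul_nonsing_inv _ hR, Matrix.mul_assoc]
  rw [Matrix.mul_assoc E, det_add_mul _ _ hS, hfactor, det_mul, mul_assoc]

theorem of_one_kronecker_eq_mul_mul_transpose {ι : Type*} [DecidableEq κ] (R : Matrix κ κ α) :
    (of fun _ _ => 1 : Matrix ι ι α) ⊗ₖ R
      = (of fun (p : ι × κ) k => if p.2 = k then (1 : α) else 0) * R
        * (of fun (p : ι × κ) k => if p.2 = k then (1 : α) else 0)ᵀ := by
  ext ⟨i, j⟩ ⟨i', j'⟩
  simp [mul_apply, kroneckerMap_apply, ite_mul, mul_ite]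

end Matrix

section GaussianConvolution

variable {ι κ : Type*} [Fintype ι] [Fintype κ] [DecidableEq ι] [DecidableEq κ]
  {S : Matrix ι ι ℝ} {R : Matrix κ κ ℝ}

theorem Matrix.PosDef.inv_add_transpose_mul_inv_mul (hS : S.PosDef) (hR : R.PosDef)
    (E : Matrix ι κ ℝ) : (R⁻¹ + Eᵀ * S⁻¹ * E).PosDef :=
  hR.inv.add_posSemidef <| by
    simpa [conjTranspose_eq_transpose_of_trivial] using
      hS.inv.posSemidef.conjTranspose_mul_mul_same E

theorem dotProduct_inv_add_mul_mul_transpose_mulVec (hS : S.PosDef) (hR : R.PosDef)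
    (E : Matrix ι κ ℝ) (v : ι → ℝ) :
    v ⬝ᵥ (S + E * R * Eᵀ)⁻¹ *ᵥ v = v ⬝ᵥ S⁻¹ *ᵥ v
      - ((Eᵀ * S⁻¹) *ᵥ v) ⬝ᵥ (R⁻¹ + Eᵀ * S⁻¹ * E)⁻¹ *ᵥ ((Eᵀ * S⁻¹) *ᵥ v) := by
  have hM := (hS.inv_add_transpose_mul_inv_mul hR E).isUnit
  have hSinv : S⁻¹ᵀ = S⁻¹ := (isHermitian_iff_isSymm.1 hS.inv.isHermitian).eq
  have hfactor : S⁻¹ * E * (R⁻¹ + Eᵀ * S⁻¹ * E)⁻¹ * Eᵀ * S⁻¹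
      = (Eᵀ * S⁻¹)ᵀ * (R⁻¹ + Eᵀ * S⁻¹ * E)⁻¹ * (Eᵀ * S⁻¹) := by
    rw [transpose_mul, transpose_transpose, hSinv]
    simp only [Matrix.mul_assoc]
  rw [add_mul_mul_inv_eq_sub _ _ _ _ hS.isUnit hR.isUnit hM, sub_mulVec, dotProduct_sub, hfactor,
    dotProduct_transpose_mul_mul_mulVec]

theorem Matrix.PosDef.exponent_add_exponent_eq_complete_square (hS : S.PosDef) (hR : R.PosDef)
    (E : Matrix ι κ ℝ) (v : ι → ℝ) (δ : κ → ℝ) :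
    (v - E *ᵥ δ) ⬝ᵥ S⁻¹ *ᵥ (v - E *ᵥ δ) + δ ⬝ᵥ R⁻¹ *ᵥ δ
      = (δ - (R⁻¹ + Eᵀ * S⁻¹ * E)⁻¹ *ᵥ (Eᵀ * S⁻¹) *ᵥ v) ⬝ᵥ (R⁻¹ + Eᵀ * S⁻¹ * E) *ᵥ
          (δ - (R⁻¹ + Eᵀ * S⁻¹ * E)⁻¹ *ᵥ (Eᵀ * S⁻¹) *ᵥ v)
        + v ⬝ᵥ (S + E * R * Eᵀ)⁻¹ *ᵥ v := by
  have hM := hS.inv_add_transpose_mul_inv_mul hR E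
  have hSinv : S⁻¹.IsSymm := isHermitian_iff_isSymm.1 hS.inv.isHermitian
  rw [isHermitian_iff_isSymm.1 hM.isHermitian |>.complete_square hM.det_pos.ne'.isUnit,
    dotProduct_inv_add_mul_mul_transpose_mulVec hS hR, hSinv.sub_dotProduct_mulVec_sub]
  have hcross : v ⬝ᵥ S⁻¹ *ᵥ E *ᵥ δ = δ ⬝ᵥ (Eᵀ * S⁻¹) *ᵥ v := by
    rw [show Eᵀ * S⁻¹ = (S⁻¹ * E)ᵀ by rw [transpose_mul, hSinv.eq], dotProduct_transpose_mulVec,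
      mulVec_mulVec]
  rw [hcross, ← dotProduct_transpose_mul_mul_mulVec, add_mulVec, dotProduct_add]
  ring

noncomputable def gaussianDensity (μ : ι → ℝ) (S : Matrix ι ι ℝ) (x : ι → ℝ) : ℝ :=
  (2 * π) ^ (-(Fintype.card ι : ℝ) / 2) * S.det ^ (-(1 : ℝ) / 2) *
    exp (-(1 / 2) * ((x - μ) ⬝ᵥ S⁻¹ *ᵥ (x - μ)))

theorem integral_gaussianDensity_mulVec_mul_gaussianDensity (hS : S.PosDef) (hR : R.PosDef)
    (E : Matrix ι κ ℝ) (v : ι → ℝ) :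
    ∫ δ, gaussianDensity (E *ᵥ δ) S v * gaussianDensity 0 R δ
      = gaussianDensity 0 (S + E * R * Eᵀ) v := by
  set M := R⁻¹ + Eᵀ * S⁻¹ * E
  set μ := M⁻¹ *ᵥ (Eᵀ * S⁻¹) *ᵥ v
  have hM : M.PosDef := hS.inv_add_transpose_mul_inv_mul hR E
  have hdet : (S + E * R * Eᵀ).det ^ (-(1 : ℝ) / 2)
      = S.det ^ (-(1 : ℝ) / 2) * R.det ^ (-(1 : ℝ) / 2) * M.det ^ (-(1 : ℝ) / 2) := by
    rw [Matrix.det_add_mul_mul_transpose hS.det_pos.ne'.isUnit hR.det_pos.ne'.isUnit,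
      mul_rpow (by positivity [hS.det_pos, hR.det_pos]) hM.det_pos.le,
      mul_rpow hS.det_pos.le hR.det_pos.le]
  set c := (2 * π) ^ (-(Fintype.card ι : ℝ) / 2) * S.det ^ (-(1 : ℝ) / 2) *
    ((2 * π) ^ (-(Fintype.card κ : ℝ) / 2) * R.det ^ (-(1 : ℝ) / 2)) *
    exp (-(1 / 2) * (v ⬝ᵥ (S + E * R * Eᵀ)⁻¹ *ᵥ v))
  have hintegrand (δ : κ → ℝ) : gaussianDensity (E *ᵥ δ) S v * gaussianDensity 0 R δ
      = c * exp (-(1 / 2) * ((δ - μ) ⬝ᵥ M *ᵥ (δ - μ))) := by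
    have hsq := hS.exponent_add_exponent_eq_complete_square hR E v δ
    simp only [gaussianDensity, sub_zero]
    calc _ = (2 * π) ^ (-(Fintype.card ι : ℝ) / 2) * S.det ^ (-(1 : ℝ) / 2) *
          ((2 * π) ^ (-(Fintype.card κ : ℝ) / 2) * R.det ^ (-(1 : ℝ) / 2)) * exp (-(1 / 2) *
            ((v - E *ᵥ δ) ⬝ᵥ S⁻¹ *ᵥ (v - E *ᵥ δ) + δ ⬝ᵥ R⁻¹ *ᵥ δ)) := by
          rw [mul_add, exp_add]; ring
      _ = _ := by rw [hsq, mul_add, exp_add]; ring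
  simp_rw [hintegrand]
  rw [integral_const_mul, integral_sub_right_eq_self (fun δ => exp (-(1 / 2) * (δ ⬝ᵥ M *ᵥ δ))),
    hM.integral_exp_neg_half_dotProduct_mulVec, gaussianDensity, hdet, sub_zero]
  have h2pi :
      (2 * π) ^ (-(Fintype.card κ : ℝ) / 2) * (2 * π) ^ ((Fintype.card κ : ℝ) / 2) = 1 := by
    rw [← rpow_add (by positivity), neg_div, neg_add_cancel, rpow_zero]
  linear_combination (2 * π) ^ (-(Fintype.card ι : ℝ) / 2) * S.det ^ (-(1 : ℝ) / 2) *
    R.det ^ (-(1 : ℝ) / 2) * M.det ^ (-(1 : ℝ) / 2) *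
    exp (-(1 / 2) * (v ⬝ᵥ (S + E * R * Eᵀ)⁻¹ *ᵥ v)) * h2pi

end GaussianConvolution

theorem stmt10_general (n s : ℕ)
    (R Sig : Matrix (Fin s) (Fin s) ℝ) (hR : R.PosDef) (hSig : Sig.PosDef)
    (v : Fin n × Fin s → ℝ) :
    let E : Matrix (Fin n × Fin s) (Fin s) ℝ :=
      Matrix.of fun p k => if p.2 = k then 1 else 0
    let W : Matrix (Fin n × Fin s) (Fin n × Fin s) ℝ :=
      (Matrix.of fun _ _ => (1 : ℝ) : Matrix (Fin n) (Fin n) ℝ) ⊗ₖ R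
        + (1 : Matrix (Fin n) (Fin n) ℝ) ⊗ₖ Sig
    (∫ δ : Fin s → ℝ,
        ((2 * Real.pi) ^ (-((n : ℝ) * (s : ℝ)) / 2) * Sig.det ^ (-(n : ℝ) / 2) *
          Real.exp (-(1 / 2) *
            ((v - E.mulVec δ) ⬝ᵥ
              (((1 : Matrix (Fin n) (Fin n) ℝ) ⊗ₖ Sig)⁻¹).mulVec (v - E.mulVec δ))))
        * ((2 * Real.pi) ^ (-(s : ℝ) / 2) * R.det ^ (-(1 : ℝ) / 2) *
            Real.exp (-(1 / 2) * (δ ⬝ᵥ R⁻¹.mulVec δ))))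
      = (2 * Real.pi) ^ (-((n : ℝ) * (s : ℝ)) / 2) * W.det ^ (-(1 : ℝ) / 2) *
          Real.exp (-(1 / 2) * (v ⬝ᵥ W⁻¹.mulVec v)) := by
  intro E W
  have hW : W = 1 ⊗ₖ Sig + E * R * Eᵀ := by
    rw [add_comm, ← of_one_kronecker_eq_mul_mul_transpose]
  have hdet : ((1 : Matrix (Fin n) (Fin n) ℝ) ⊗ₖ Sig).det ^ (-(1 : ℝ) / 2)
      = Sig.det ^ (-(n : ℝ) / 2) := by
    rw [det_kronecker, det_one, one_pow, one_mul, Fintype.card_fin, ← rpow_natCast,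
      ← rpow_mul hSig.det_pos.le]
    ring_nf
  have key :=
    integral_gaussianDensity_mulVec_mul_gaussianDensity (PosDef.one.kronecker hSig) hR E v
  rw [← hW] at key
  simpa only [gaussianDensity, sub_zero, hdet, Fintype.card_prod, Fintype.card_fin, Nat.cast_mul]
    using key

theorem stmt10 (n s : ℕ) (hn : 1 ≤ n) (hs : 1 ≤ s)
    (R Sig : Matrix (Fin s) (Fin s) ℝ) (hR : R.PosDef) (hSig : Sig.PosDef)
    (v : Fin n × Fin s → ℝ) :
    let E : Matrix (Fin n × Fin s) (Fin s) ℝ :=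
      Matrix.of fun p k => if p.2 = k then 1 else 0
    let W : Matrix (Fin n × Fin s) (Fin n × Fin s) ℝ :=
      (Matrix.of fun _ _ => (1 : ℝ) : Matrix (Fin n) (Fin n) ℝ) ⊗ₖ R
        + (1 : Matrix (Fin n) (Fin n) ℝ) ⊗ₖ Sig
    (∫ δ : Fin s → ℝ,
        ((2 * Real.pi) ^ (-((n : ℝ) * (s : ℝ)) / 2) * Sig.det ^ (-(n : ℝ) / 2) *
          Real.exp (-(1 / 2) *
            ((v - E.mulVec δ) ⬝ᵥ
              (((1 : Matrix (Fin n) (Fin n) ℝ) ⊗ₖ Sig)⁻¹).mulVec (v - E.mulVec δ))))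
        * ((2 * Real.pi) ^ (-(s : ℝ) / 2) * R.det ^ (-(1 : ℝ) / 2) *
            Real.exp (-(1 / 2) * (δ ⬝ᵥ R⁻¹.mulVec δ))))
      = (2 * Real.pi) ^ (-((n : ℝ) * (s : ℝ)) / 2) * W.det ^ (-(1 : ℝ) / 2) *
          Real.exp (-(1 / 2) * (v ⬝ᵥ W⁻¹.mulVec v)) :=
  stmt10_general n s R Sig hR hSig v
end

section
/- Let n ≥ 1 and s ≥ 1 be natural numbers, let R and Σ be symmetric positive definite s×s real matrices, let G be an s×n real matrix, and let H = I_n − (1/n)·J_n. Then Σ⁻¹·G·Gᵀ − Σ⁻¹·((n·R)⁻¹ + Σ⁻¹)⁻¹·Σ⁻¹·G·((1/n)·J_n)·Gᵀ = (Σ + n·R)⁻¹·G·Gᵀ + ((1/n)·Σ·R⁻¹·Σ + Σ)⁻¹·G·H·Gᵀ, as an equality of s×s matrices. -/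
/-! With `K = (n R)⁻¹ + Σ⁻¹`, the Woodbury identity gives `(Σ + n R)⁻¹ = Σ⁻¹ - Σ⁻¹ K⁻¹ Σ⁻¹`,
while `(1/n) Σ R⁻¹ Σ + Σ = Σ K Σ` has inverse `Σ⁻¹ K⁻¹ Σ⁻¹`. Splitting `G H Gᵀ` as
`G Gᵀ - G (J/n) Gᵀ`, the two `Σ⁻¹ K⁻¹ Σ⁻¹ G Gᵀ` terms cancel and both sides agree. -/

open Matrix

namespace Matrix

variable {m : Type*} [Fintype m] [DecidableEq m]

theorem inv_add_eq_sub_inv_mul_inv_add_inv_mul_inv {α : Type*} [CommRing α]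
    {A B : Matrix m m α} (hA : IsUnit A) (hB : IsUnit B) (hAB : IsUnit (B⁻¹ + A⁻¹)) :
    (A + B)⁻¹ = A⁻¹ - A⁻¹ * (B⁻¹ + A⁻¹)⁻¹ * A⁻¹ := by
  simpa using add_mul_mul_inv_eq_sub A 1 B 1 hA hB (by simpa using hAB)

theorem inv_smul_mul_inv_mul_add_self {𝕜 : Type*} [Field 𝕜] {A B : Matrix m m 𝕜}
    (hA : IsUnit A.det) (hB : IsUnit B.det) {c : 𝕜} (hc : c ≠ 0) :
    c⁻¹ • (A * B⁻¹ * A) + A = A * ((c • B)⁻¹ + A⁻¹) * A := by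
  have hcB : (c • B)⁻¹ = c⁻¹ • B⁻¹ := inv_smul' B (Units.mk0 c hc) hB
  rw [hcB, Matrix.mul_add, Matrix.add_mul, mul_nonsing_inv _ hA, Matrix.one_mul, Matrix.mul_smul,
    Matrix.smul_mul]

end Matrix

theorem stmt14_general (n s : ℕ) (hn : 1 ≤ n)
    (R Sig : Matrix (Fin s) (Fin s) ℝ) (hR : R.PosDef) (hSig : Sig.PosDef)
    (G : Matrix (Fin s) (Fin n) ℝ) :
    let J : Matrix (Fin n) (Fin n) ℝ := Matrix.of fun _ _ => 1
    let H : Matrix (Fin n) (Fin n) ℝ := 1 - (1 / (n : ℝ)) • J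
    Sig⁻¹ * (G * Gᵀ)
        - Sig⁻¹ * (((n : ℝ) • R)⁻¹ + Sig⁻¹)⁻¹ * Sig⁻¹ * (G * ((1 / (n : ℝ)) • J) * Gᵀ)
      = (Sig + (n : ℝ) • R)⁻¹ * (G * Gᵀ)
        + ((1 / (n : ℝ)) • (Sig * R⁻¹ * Sig) + Sig)⁻¹ * (G * H * Gᵀ) := by
  intro J H
  have hn₀ : (0 : ℝ) < n := by exact_mod_cast hn
  have hnR : ((n : ℝ) • R).PosDef := hR.smul hn₀
  have hK : (((n : ℝ) • R)⁻¹ + Sig⁻¹).PosDef := hnR.inv.add hSig.inv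
  have hSig_det : IsUnit Sig.det := (isUnit_iff_isUnit_det _).mp hSig.isUnit
  have hR_det : IsUnit R.det := (isUnit_iff_isUnit_det _).mp hR.isUnit
  have woodbury := inv_add_eq_sub_inv_mul_inv_add_inv_mul_inv hSig.isUnit hnR.isUnit hK.isUnit
  have hSKS : ((1 / (n : ℝ)) • (Sig * R⁻¹ * Sig) + Sig)⁻¹
      = Sig⁻¹ * (((n : ℝ) • R)⁻¹ + Sig⁻¹)⁻¹ * Sig⁻¹ := by
    rw [one_div, inv_smul_mul_inv_mul_add_self hSig_det hR_det hn₀.ne', Matrix.mul_inv_rev,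
      Matrix.mul_inv_rev, Matrix.mul_assoc]
  have hGHG : G * H * Gᵀ = G * Gᵀ - G * ((1 / (n : ℝ)) • J) * Gᵀ := by
    rw [Matrix.mul_sub, Matrix.mul_one, Matrix.sub_mul]
  rw [woodbury, hSKS, hGHG, Matrix.sub_mul, Matrix.mul_sub]
  abel

theorem stmt14 (n s : ℕ) (hn : 1 ≤ n) (hs : 1 ≤ s)
    (R Sig : Matrix (Fin s) (Fin s) ℝ) (hR : R.PosDef) (hSig : Sig.PosDef)
    (G : Matrix (Fin s) (Fin n) ℝ) :
    let J : Matrix (Fin n) (Fin n) ℝ := Matrix.of fun _ _ => 1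
    let H : Matrix (Fin n) (Fin n) ℝ := 1 - (1 / (n : ℝ)) • J
    Sig⁻¹ * (G * Gᵀ)
        - Sig⁻¹ * (((n : ℝ) • R)⁻¹ + Sig⁻¹)⁻¹ * Sig⁻¹ * (G * ((1 / (n : ℝ)) • J) * Gᵀ)
      = (Sig + (n : ℝ) • R)⁻¹ * (G * Gᵀ)
        + ((1 / (n : ℝ)) • (Sig * R⁻¹ * Sig) + Sig)⁻¹ * (G * H * Gᵀ) :=
  stmt14_general n s hn R Sig hR hSig G
end
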